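/- Let X be a closed subset of ℂ^n, let Σ(X) ⊆ ℂ^n denote the closure of the set of secant directions {(x − y)/‖x − y‖ : x, y ∈ X, x ≠ y}, and let π : ℂ^n → ℂ^l be a surjective ℂ-linear map. Then the restriction π|_X is bi-Lipschitz onto its image (i.e., there exists K ≥ 1 with (1/K)·‖x − y‖ ≤ ‖π(x) − π(y)‖ ≤ K·‖x − y‖ for all x, y ∈ X) if and only if Σ(X) ∩ ker π = ∅. -/

import Mathlib

/-!
For a linear map the upper Lipschitz bound always holds, with the operator norm, and the
lower one, `c‖x - y‖ ≤ ‖π x - π y‖` on `X`, says exactly that `c ≤ ‖π v‖` for every secant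
direction `v`, hence for every `v` in the closure `Σ(X)`. So a lower bound forces
`Σ(X) ∩ ker π = ∅`; conversely `Σ(X)` lies in the unit sphere and is compact, so if it misses
`ker π` the continuous function `‖π v‖` is bounded below on it by a positive constant.
-/

/-- The set of secant directions of `X`: all unit vectors `(x − y)/‖x − y‖` for
`x, y ∈ X`, `x ≠ y`. -/
def secantDirections {E : Type*} [NormedAddCommGroup E] [NormedSpace ℝ E]
    (X : Set E) : Set E :=
  {v | ∃ x ∈ X, ∃ y ∈ X, x ≠ y ∧ v = ‖x - y‖⁻¹ • (x - y)}

section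

variable {E F : Type*} [NormedAddCommGroup E] [NormedSpace ℝ E]
  [NormedAddCommGroup F] [NormedSpace ℝ F]

theorem secantDirections_subset_sphere (X : Set E) :
    secantDirections X ⊆ Metric.sphere 0 1 := by
  rintro _ ⟨x, -, y, -, hxy, rfl⟩
  rw [mem_sphere_zero_iff_norm, norm_smul, norm_inv, norm_norm,
    inv_mul_cancel₀ (norm_ne_zero_iff.2 (sub_ne_zero.2 hxy))]

theorem isCompact_closure_secantDirections [ProperSpace E] (X : Set E) :
    IsCompact (closure (secantDirections X)) :=
  (isCompact_sphere 0 1).closure_of_subset (secantDirections_subset_sphere X)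

theorem le_norm_map_secant_iff (f : E →L[ℝ] F) {x y : E} (hxy : x ≠ y) (c : ℝ) :
    c ≤ ‖f (‖x - y‖⁻¹ • (x - y))‖ ↔ c * ‖x - y‖ ≤ ‖f x - f y‖ := by
  rw [map_smul, norm_smul, norm_inv, norm_norm, map_sub,
    le_inv_mul_iff₀ (norm_pos_iff.2 (sub_ne_zero.2 hxy)), mul_comm]

theorem forall_mul_norm_sub_le_iff_forall_mem_closure_secantDirections (f : E →L[ℝ] F)
    (X : Set E) (c : ℝ) :
    (∀ x ∈ X, ∀ y ∈ X, c * ‖x - y‖ ≤ ‖f x - f y‖) ↔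
      ∀ v ∈ closure (secantDirections X), c ≤ ‖f v‖ := by
  constructor
  · intro h
    refine fun v hv ↦ closure_minimal ?_ (isClosed_le continuous_const (map_continuous f).norm) hv
    rintro _ ⟨x, hx, y, hy, hxy, rfl⟩
    exact (le_norm_map_secant_iff f hxy c).2 (h x hx y hy)
  · intro h x hx y hy
    obtain rfl | hxy := eq_or_ne x y
    · simp
    · exact (le_norm_map_secant_iff f hxy c).1 (h _ (subset_closure ⟨x, hx, y, hy, hxy, rfl⟩))

theorem exists_biLipschitz_const_of_mul_norm_sub_le (f : E →L[ℝ] F) {X : Set E} {c : ℝ}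
    (hc : 0 < c) (h : ∀ x ∈ X, ∀ y ∈ X, c * ‖x - y‖ ≤ ‖f x - f y‖) :
    ∃ K : ℝ, 1 ≤ K ∧ ∀ x ∈ X, ∀ y ∈ X,
      (1 / K) * ‖x - y‖ ≤ ‖f x - f y‖ ∧ ‖f x - f y‖ ≤ K * ‖x - y‖ := by
  refine ⟨max c⁻¹ (max ‖f‖ 1), (le_max_right _ _).trans (le_max_right _ _),
    fun x hx y hy ↦ ⟨?_, ?_⟩⟩
  · have hK : 1 / max c⁻¹ (max ‖f‖ 1) ≤ c :=
      (one_div_le (by positivity) hc).2 (by rw [one_div]; exact le_max_left _ _)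
    calc 1 / max c⁻¹ (max ‖f‖ 1) * ‖x - y‖ ≤ c * ‖x - y‖ := by gcongr
      _ ≤ ‖f x - f y‖ := h x hx y hy
  · calc ‖f x - f y‖ = ‖f (x - y)‖ := by rw [map_sub]
      _ ≤ ‖f‖ * ‖x - y‖ := f.le_opNorm _
      _ ≤ max c⁻¹ (max ‖f‖ 1) * ‖x - y‖ := by
        gcongr
        exact (le_max_left _ _).trans (le_max_right _ _)

end

theorem biLipschitz_iff_secant_directions_disjoint_ker_general {n l : ℕ}
    (X : Set (EuclideanSpace ℂ (Fin n)))
    (π : EuclideanSpace ℂ (Fin n) →ₗ[ℂ] EuclideanSpace ℂ (Fin l)) :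
    (∃ K : ℝ, 1 ≤ K ∧ ∀ x ∈ X, ∀ y ∈ X,
        (1 / K) * ‖x - y‖ ≤ ‖π x - π y‖ ∧ ‖π x - π y‖ ≤ K * ‖x - y‖)
      ↔ closure (secantDirections X) ∩ (LinearMap.ker π : Set (EuclideanSpace ℂ (Fin n))) = ∅ := by
  let f := (LinearMap.toContinuousLinearMap π).restrictScalars ℝ
  have hf : ∀ v, f v = π v := fun _ ↦ rfl
  rw [Set.eq_empty_iff_forall_notMem]
  constructor
  · rintro ⟨K, hK, hbi⟩ v ⟨hv, hker⟩
    have hlow := (forall_mul_norm_sub_le_iff_forall_mem_closure_secantDirections f X (1 / K)).1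
      (fun x hx y hy ↦ (hbi x hx y hy).1) v hv
    rw [hf, LinearMap.mem_ker.1 hker, norm_zero] at hlow
    have : 0 < 1 / K := by positivity
    linarith
  · intro hdisj
    obtain ⟨c, hc, hcf⟩ := (isCompact_closure_secantDirections X).exists_forall_le'
      (map_continuous f).norm.continuousOn (a := 0)
      fun v hv ↦ norm_pos_iff.2 fun h ↦ hdisj v ⟨hv, h⟩
    exact exists_biLipschitz_const_of_mul_norm_sub_le f hc
      ((forall_mul_norm_sub_le_iff_forall_mem_closure_secantDirections f X c).2 hcf)

/-- For a closed set `X ⊆ ℂ^n` and a surjective `ℂ`-linear map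
`π : ℂ^n → ℂ^l`, the restriction `π|_X` is bi-Lipschitz onto its image if and only if
the closure `Σ(X)` of the set of secant directions of `X` is disjoint from `ker π`. -/
theorem biLipschitz_iff_secant_directions_disjoint_ker {n l : ℕ}
    (X : Set (EuclideanSpace ℂ (Fin n))) (hX : IsClosed X)
    (π : EuclideanSpace ℂ (Fin n) →ₗ[ℂ] EuclideanSpace ℂ (Fin l))
    (hπ : Function.Surjective π) :
    (∃ K : ℝ, 1 ≤ K ∧ ∀ x ∈ X, ∀ y ∈ X,
        (1 / K) * ‖x - y‖ ≤ ‖π x - π y‖ ∧ ‖π x - π y‖ ≤ K * ‖x - y‖)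
      ↔ closure (secantDirections X) ∩ (LinearMap.ker π : Set (EuclideanSpace ℂ (Fin n))) = ∅ :=
  biLipschitz_iff_secant_directions_disjoint_ker_general X π
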